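/- arXiv:2307.04521 — 2 statements merged into one kernel-verified Lean document; each statement's English description precedes it below -/
import Mathlib

section
/- For each of the two choices V = H¹(0,1) and V = H¹_{(0}(0,1) the following holds: for every κ ∈ ℂ_{≥0} with κ ≠ 0 and every u ∈ V with u ≠ 0, there exists v ∈ V with v ≠ 0 (one may take v = (κ/|κ|)·u) such that Re a¹ᴰ_κ(u,v) ≥ (Re κ/|κ|) · ‖u‖_{1,|κ|} · ‖v‖_{1,|κ|}; that is, the inf-sup constant of a¹ᴰ_κ with respect to the norm ‖·‖_{1,|κ|} is at least Re κ/|κ|. -/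
open MeasureTheory

/-- A function in `H¹(0,L)`: a pair `(toFun, deriv)` where `toFun` is continuous on `[0,L]`,
`deriv` is square-integrable on `(0,L)`, and `toFun x = toFun 0 + ∫₀ˣ deriv` on `[0,L]`. -/
structure H1 (L : ℝ) where
  toFun : ℝ → ℂ
  deriv : ℝ → ℂ
  continuousOn : ContinuousOn toFun (Set.Icc 0 L)
  memLp_deriv : MemLp deriv 2 (volume.restrict (Set.Ioo 0 L))
  eq_intderiv : ∀ x ∈ Set.Icc 0 L, toFun x = toFun 0 + ∫ t in (0:ℝ)..x, deriv t

/-- The sesquilinear form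
`a¹ᴰ_κ(u,v) = ∫₀ᴸ u' conj(v') + κ² ∫₀ᴸ u conj(v) + κ u(L) conj(v(L))`. -/
noncomputable def a1D (L : ℝ) (κ : ℂ) (u v : H1 L) : ℂ :=
  (∫ t in Set.Ioo (0:ℝ) L, u.deriv t * star (v.deriv t)) +
    κ ^ 2 * (∫ t in Set.Ioo (0:ℝ) L, u.toFun t * star (v.toFun t)) +
    κ * u.toFun L * star (v.toFun L)

/-- The weighted `H¹` norm `‖u‖²_{1,s} = ‖u'‖²_{L²(0,L)} + s² ‖u‖²_{L²(0,L)}`. -/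
noncomputable def h1Norm (L : ℝ) (s : ℝ) (u : H1 L) : ℝ :=
  Real.sqrt ((∫ t in Set.Ioo (0:ℝ) L, ‖u.deriv t‖ ^ 2) +
    s ^ 2 * ∫ t in Set.Ioo (0:ℝ) L, ‖u.toFun t‖ ^ 2)

/-- The `L²(0,L)` norm. -/
noncomputable def l2Norm (L : ℝ) (f : ℝ → ℂ) : ℝ :=
  Real.sqrt (∫ t in Set.Ioo (0:ℝ) L, ‖f t‖ ^ 2)

/-! Test `a¹ᴰ_κ(u, ·)` against `v = c u` with the unimodular `c = κ/|κ|`. Then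
`‖v‖_{1,|κ|} = ‖u‖_{1,|κ|}`, and since `conj c · κ = |κ|`,
`Re a¹ᴰ_κ(u,v) = (Re κ/|κ|) ‖u'‖² + |κ| Re κ ‖u‖² + |κ| |u(1)|² ≥ (Re κ/|κ|) ‖u‖²_{1,|κ|}`. -/

namespace H1

variable {L : ℝ}

instance : SMul ℂ (H1 L) where
  smul c u :=
    { toFun := fun t => c * u.toFun t
      deriv := fun t => c * u.deriv t
      continuousOn := continuousOn_const.mul u.continuousOn
      memLp_deriv := u.memLp_deriv.const_mul c
      eq_intderiv := fun x hx => by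
        rw [intervalIntegral.integral_const_mul, u.eq_intderiv x hx]
        ring }

@[simp]
theorem smul_toFun (c : ℂ) (u : H1 L) (t : ℝ) : (c • u).toFun t = c * u.toFun t := rfl

@[simp]
theorem smul_deriv (c : ℂ) (u : H1 L) (t : ℝ) : (c • u).deriv t = c * u.deriv t := rfl

end H1

theorem a1D_smul_right (L : ℝ) (κ c : ℂ) (u v : H1 L) :
    a1D L κ u (c • v) = star c * a1D L κ u v := by
  simp only [a1D, H1.smul_toFun, H1.smul_deriv, star_mul', mul_left_comm _ (star c),
    integral_const_mul]
  ring

theorem a1D_self (L : ℝ) (κ : ℂ) (u : H1 L) :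
    a1D L κ u u = ((∫ t in Set.Ioo (0:ℝ) L, ‖u.deriv t‖ ^ 2 : ℝ) : ℂ) +
      κ ^ 2 * ((∫ t in Set.Ioo (0:ℝ) L, ‖u.toFun t‖ ^ 2 : ℝ) : ℂ) +
      κ * ((‖u.toFun L‖ ^ 2 : ℝ) : ℂ) := by
  simp only [a1D, Complex.star_def, Complex.mul_conj', mul_assoc, ← Complex.ofReal_pow,
    integral_complex_ofReal]

theorem h1Norm_sq (L s : ℝ) (u : H1 L) :
    h1Norm L s u ^ 2 = (∫ t in Set.Ioo (0:ℝ) L, ‖u.deriv t‖ ^ 2) +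
      s ^ 2 * ∫ t in Set.Ioo (0:ℝ) L, ‖u.toFun t‖ ^ 2 :=
  Real.sq_sqrt <| add_nonneg (integral_nonneg fun _ => by positivity)
    (mul_nonneg (sq_nonneg s) (integral_nonneg fun _ => by positivity))

theorem h1Norm_smul (L s : ℝ) (c : ℂ) (u : H1 L) :
    h1Norm L s (c • u) = ‖c‖ * h1Norm L s u := by
  have hsq : (h1Norm L s (c • u)) ^ 2 = (‖c‖ * h1Norm L s u) ^ 2 := by
    simp only [h1Norm_sq, mul_pow, H1.smul_toFun, H1.smul_deriv, norm_mul, integral_const_mul]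
    ring
  exact (pow_left_inj₀ (Real.sqrt_nonneg _) (mul_nonneg (norm_nonneg _) (Real.sqrt_nonneg _))
    two_ne_zero).mp hsq

theorem star_div_norm_mul_self {κ : ℂ} (hκ : κ ≠ 0) : star (κ / ‖κ‖) * κ = ‖κ‖ := by
  rw [star_div₀, Complex.star_def, Complex.conj_ofReal, div_mul_eq_mul_div, Complex.conj_mul',
    sq, mul_div_assoc, div_self (Complex.ofReal_ne_zero.mpr (norm_ne_zero_iff.mpr hκ)), mul_one]

theorem re_star_div_norm_mul {κ : ℂ} (hκ : κ ≠ 0) (A B C : ℝ) :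
    (star (κ / ‖κ‖) * (A + κ ^ 2 * B + κ * C)).re =
      κ.re / ‖κ‖ * (A + ‖κ‖ ^ 2 * B) + ‖κ‖ * C := by
  have h : star (κ / ‖κ‖) * (A + κ ^ 2 * B + κ * C) =
      star (κ / ‖κ‖) * A + ‖κ‖ * κ * B + ‖κ‖ * C := by
    linear_combination (κ * B + C) * star_div_norm_mul_self hκ
  rw [h]
  simp only [Complex.add_re, Complex.re_mul_ofReal, Complex.re_ofReal_mul, star_div₀,
    Complex.star_def, Complex.conj_ofReal, Complex.div_ofReal_re, Complex.conj_re,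
    Complex.ofReal_re]
  field_simp

theorem infSup_a1D_re_div_abs_general (zeroBC : Bool) (κ : ℂ) (hκ : κ ≠ 0)
    (u : H1 1) (hu0 : zeroBC = true → u.toFun 0 = 0)
    (hu : ∃ x ∈ Set.Icc (0:ℝ) 1, u.toFun x ≠ 0) :
    ∃ v : H1 1, (zeroBC = true → v.toFun 0 = 0) ∧
      (∃ x ∈ Set.Icc (0:ℝ) 1, v.toFun x ≠ 0) ∧
      (κ.re / ‖κ‖) *
          (h1Norm 1 (‖κ‖) u * h1Norm 1 (‖κ‖) v)
        ≤ (a1D 1 κ u v).re := by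
  obtain ⟨x, hx, hux⟩ := hu
  have hc : ‖κ / ‖κ‖‖ = 1 := by simp [hκ]
  refine ⟨(κ / ‖κ‖ : ℂ) • u, fun h => by simp [hu0 h], ⟨x, hx, by simp [hκ, hux]⟩, ?_⟩
  rw [h1Norm_smul, hc, one_mul, ← sq, h1Norm_sq, a1D_smul_right, a1D_self,
    re_star_div_norm_mul hκ]
  exact le_add_of_nonneg_right (by positivity)

/-- For `V = H¹(0,1)` (`zeroBC = false`) or `V = H¹_{(0}(0,1)`
(`zeroBC = true`), every `κ ∈ ℂ_{≥0} \ {0}` and every `u ∈ V`, `u ≠ 0`, there exists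
`v ∈ V`, `v ≠ 0`, with `Re a¹ᴰ_κ(u,v) ≥ (Re κ / |κ|) ‖u‖_{1,|κ|} ‖v‖_{1,|κ|}`;
i.e. the inf-sup constant of `a¹ᴰ_κ` is at least `Re κ / |κ|`. -/
theorem infSup_a1D_re_div_abs (zeroBC : Bool) (κ : ℂ) (hre : 0 ≤ κ.re) (hκ : κ ≠ 0)
    (u : H1 1) (hu0 : zeroBC = true → u.toFun 0 = 0)
    (hu : ∃ x ∈ Set.Icc (0:ℝ) 1, u.toFun x ≠ 0) :
    ∃ v : H1 1, (zeroBC = true → v.toFun 0 = 0) ∧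
      (∃ x ∈ Set.Icc (0:ℝ) 1, v.toFun x ≠ 0) ∧
      (κ.re / ‖κ‖) *
          (h1Norm 1 (‖κ‖) u * h1Norm 1 (‖κ‖) v)
        ≤ (a1D 1 κ u v).re :=
  infSup_a1D_re_div_abs_general zeroBC κ hκ u hu0 hu
end

section
/- Suppose β, η, γ solve the first-order ODE system −β' + γ − iωη = f₂, η' + iωβ = g₂, η + iω·λ⁻¹·γ = g₃ almost everywhere on (0,L), with boundary conditions β(0) = 0 and λ̃·η(L) = iω·β(L). Then β satisfies the weak second-order formulation: for every H¹(0,L) function v with v(0) = 0, ∫₀ᴸ β'·conj(v') dt + (λ − ω²)·∫₀ᴸ β·conj(v) dt + λ̃·β(L)·conj(v(L)) = −∫₀ᴸ f₂·conj(v') dt + (λ/(iω))·∫₀ᴸ g₃·conj(v') dt + ((λ − ω²)/(iω))·∫₀ᴸ g₂·conj(v) dt. -/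
open MeasureTheory

/-! Eliminating `γ` from the first and third equations gives
`iωβ' + (λ - ω²)η = -iωf₂ + λg₃`; pair it with `v'`, and the second equation with `v`.
Integration by parts `∫ η' v̄ + ∫ η v̄' = η(L) v̄(L)` turns the remaining terms into
`(λ - ω²) η(L) v̄(L) = λ̃ (λ̃ η(L)) v̄(L) = λ̃ iω β(L) v̄(L)` by the boundary condition.
Integration by parts in `H¹` is Fubini: writing `u` and `w` as primitives of `u'` and `w'`, the
two cross terms are the integrals of `u'(s) w'(t)` over the complementary triangles `s ≤ t` and
`t < s` of the square. -/

open Set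

section Triangle

variable {𝕜 : Type*} [RCLike 𝕜] {μ : Measure ℝ} {f g : ℝ → 𝕜}

lemma integral_indicator_lt_mul (t : ℝ) :
    ∫ s, {p : ℝ × ℝ | p.2 < p.1}.indicator (fun p ↦ f p.1 * g p.2) (t, s) ∂μ =
      f t * ∫ s in Iio t, g s ∂μ := by
  rw [← integral_indicator measurableSet_Iio, ← integral_const_mul]
  congr 1 with s
  by_cases h : s < t <;> simp [indicator, h]

lemma integral_indicator_le_mul (t : ℝ) :
    ∫ s, {p : ℝ × ℝ | p.1 ≤ p.2}.indicator (fun p ↦ f p.1 * g p.2) (s, t) ∂μ =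
      (∫ s in Iic t, f s ∂μ) * g t := by
  rw [← integral_indicator measurableSet_Iic, ← integral_mul_const]
  congr 1 with s
  by_cases h : s ≤ t <;> simp [indicator, h]

variable [SFinite μ]

lemma integrable_mul_setIntegral_Iio (hf : Integrable f μ) (hg : Integrable g μ) :
    Integrable (fun t ↦ f t * ∫ s in Iio t, g s ∂μ) μ :=
  ((hf.mul_prod hg).indicator (measurableSet_lt measurable_snd measurable_fst)).integral_prod_left
    |>.congr (.of_forall integral_indicator_lt_mul)

lemma integrable_setIntegral_Iic_mul (hf : Integrable f μ) (hg : Integrable g μ) :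
    Integrable (fun t ↦ (∫ s in Iic t, f s ∂μ) * g t) μ :=
  ((hf.mul_prod hg).indicator (measurableSet_le measurable_fst measurable_snd)).integral_prod_right
    |>.congr (.of_forall integral_indicator_le_mul)

lemma integral_mul_setIntegral_Iio (hf : Integrable f μ) (hg : Integrable g μ) :
    ∫ t, f t * ∫ s in Iio t, g s ∂μ ∂μ =
      ∫ p in {p : ℝ × ℝ | p.2 < p.1}, f p.1 * g p.2 ∂μ.prod μ := by
  have hs : MeasurableSet {p : ℝ × ℝ | p.2 < p.1} := measurableSet_lt measurable_snd measurable_fst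
  rw [← integral_indicator hs, integral_prod _ ((hf.mul_prod hg).indicator hs)]
  simp only [integral_indicator_lt_mul]

lemma integral_setIntegral_Iic_mul (hf : Integrable f μ) (hg : Integrable g μ) :
    ∫ t, (∫ s in Iic t, f s ∂μ) * g t ∂μ =
      ∫ p in {p : ℝ × ℝ | p.1 ≤ p.2}, f p.1 * g p.2 ∂μ.prod μ := by
  have hs : MeasurableSet {p : ℝ × ℝ | p.1 ≤ p.2} := measurableSet_le measurable_fst measurable_snd
  rw [← integral_indicator hs, integral_prod_symm _ ((hf.mul_prod hg).indicator hs)]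
  simp only [integral_indicator_le_mul]

theorem integral_mul_setIntegral_Iio_add_integral_setIntegral_Iic_mul
    (hf : Integrable f μ) (hg : Integrable g μ) :
    ∫ t, f t * (∫ s in Iio t, g s ∂μ) ∂μ + ∫ t, (∫ s in Iic t, f s ∂μ) * g t ∂μ =
      (∫ t, f t ∂μ) * ∫ t, g t ∂μ := by
  rw [integral_mul_setIntegral_Iio hf hg, integral_setIntegral_Iic_mul hf hg, ← integral_prod_mul]
  convert integral_add_compl (measurableSet_lt measurable_snd measurable_fst) (hf.mul_prod hg)
    using 3
  simp only [compl_ofPred, not_lt]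

end Triangle

lemma integral_const_mul_add_mul_star {α 𝕜 : Type*} [RCLike 𝕜] [MeasurableSpace α]
    {μ : Measure α} {F G v : α → 𝕜} (a b : 𝕜) (hF : MemLp F 2 μ) (hG : MemLp G 2 μ)
    (hv : MemLp v 2 μ) :
    ∫ t, (a * F t + b * G t) * star (v t) ∂μ =
      a * (∫ t, F t * star (v t) ∂μ) + b * ∫ t, G t * star (v t) ∂μ := by
  simp only [add_mul, mul_assoc]
  rw [integral_add, integral_const_mul, integral_const_mul]
  exacts [(hF.integrable_mul hv.star).const_mul a, (hG.integrable_mul hv.star).const_mul b]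

namespace H1

variable {L : ℝ}

def conj (u : H1 L) : H1 L where
  toFun t := star (u.toFun t)
  deriv t := star (u.deriv t)
  continuousOn := continuous_star.comp_continuousOn u.continuousOn
  memLp_deriv := u.memLp_deriv.star
  eq_intderiv x hx := by
    rw [u.eq_intderiv x hx, star_add, intervalIntegral.integral_of_le hx.1,
      intervalIntegral.integral_of_le hx.1]
    exact congrArg _ integral_conj.symm

lemma memLp_toFun (u : H1 L) : MemLp u.toFun 2 (volume.restrict (Ioo 0 L)) := by
  obtain ⟨C, hC⟩ := isCompact_Icc.exists_bound_of_continuousOn u.continuousOn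
  refine (memLp_top_of_bound ?_ C ?_).mono_exponent le_top
  · exact (u.continuousOn.mono Ioo_subset_Icc_self).aestronglyMeasurable measurableSet_Ioo
  · filter_upwards [ae_restrict_mem measurableSet_Ioo] with t ht
    exact hC t (Ioo_subset_Icc_self ht)

lemma integrable_deriv (u : H1 L) : Integrable u.deriv (volume.restrict (Ioo 0 L)) :=
  u.memLp_deriv.integrable one_le_two

lemma toFun_eq_add_setIntegral_Ioc (u : H1 L) {t : ℝ} (ht : t ∈ Icc 0 L) :
    u.toFun t = u.toFun 0 + ∫ s in Ioc 0 t, u.deriv s := by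
  rw [u.eq_intderiv t ht, intervalIntegral.integral_of_le ht.1]

lemma toFun_eq_add_setIntegral_Iic (u : H1 L) {t : ℝ} (ht : t ∈ Ioo 0 L) :
    u.toFun t = u.toFun 0 + ∫ s in Iic t, u.deriv s ∂volume.restrict (Ioo 0 L) := by
  have hset : Iic t ∩ Ioo 0 L = Ioc 0 t := by
    ext s
    simp only [mem_inter_iff, mem_Iic, mem_Ioo, mem_Ioc]
    grind
  rw [Measure.restrict_restrict measurableSet_Iic, hset,
    u.toFun_eq_add_setIntegral_Ioc (Ioo_subset_Icc_self ht)]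

lemma toFun_eq_add_setIntegral_Iio (u : H1 L) {t : ℝ} (ht : t ∈ Ioo 0 L) :
    u.toFun t = u.toFun 0 + ∫ s in Iio t, u.deriv s ∂volume.restrict (Ioo 0 L) := by
  rw [Measure.restrict_restrict measurableSet_Iio, Iio_inter_Ioo, min_eq_left ht.2.le,
    ← integral_Ioc_eq_integral_Ioo, u.toFun_eq_add_setIntegral_Ioc (Ioo_subset_Icc_self ht)]

lemma toFun_right_eq (hL : 0 ≤ L) (u : H1 L) :
    u.toFun L = u.toFun 0 + ∫ s in Ioo 0 L, u.deriv s := by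
  rw [← integral_Ioc_eq_integral_Ioo, u.toFun_eq_add_setIntegral_Ioc ⟨hL, le_rfl⟩]

theorem integral_deriv_mul_add_integral_mul_deriv (hL : 0 ≤ L) (u w : H1 L) :
    (∫ t in Ioo 0 L, u.deriv t * w.toFun t) + ∫ t in Ioo 0 L, u.toFun t * w.deriv t =
      u.toFun L * w.toFun L - u.toFun 0 * w.toFun 0 := by
  set μ := volume.restrict (Ioo 0 L)
  have hu' := u.integrable_deriv
  have hw' := w.integrable_deriv
  have hu : ∀ᵐ t ∂μ, u.toFun t * w.deriv t =
      u.toFun 0 * w.deriv t + (∫ s in Iic t, u.deriv s ∂μ) * w.deriv t := by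
    filter_upwards [ae_restrict_mem measurableSet_Ioo] with t ht
    rw [u.toFun_eq_add_setIntegral_Iic ht]
    ring
  have hw : ∀ᵐ t ∂μ, u.deriv t * w.toFun t =
      w.toFun 0 * u.deriv t + u.deriv t * ∫ s in Iio t, w.deriv s ∂μ := by
    filter_upwards [ae_restrict_mem measurableSet_Ioo] with t ht
    rw [w.toFun_eq_add_setIntegral_Iio ht]
    ring
  rw [integral_congr_ae hu, integral_congr_ae hw,
    integral_add (hu'.const_mul _) (integrable_mul_setIntegral_Iio hu' hw'),
    integral_add (hw'.const_mul _) (integrable_setIntegral_Iic_mul hu' hw'),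
    integral_const_mul, integral_const_mul, u.toFun_right_eq hL, w.toFun_right_eq hL]
  linear_combination integral_mul_setIntegral_Iio_add_integral_setIntegral_Iic_mul hu' hw'

end H1

lemma I_mul_add_sub_sq_mul_eq {ω lam b γ e f g : ℂ} (hlam : lam ≠ 0)
    (h₁ : -b + γ - Complex.I * ω * e = f) (h₃ : e + Complex.I * ω * lam⁻¹ * γ = g) :
    Complex.I * ω * b + (lam - ω ^ 2) * e = -(Complex.I * ω) * f + lam * g := by
  linear_combination -(Complex.I * ω) * h₁ + lam * h₃ - Complex.I * ω * γ * mul_inv_cancel₀ hlam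
    - ω ^ 2 * e * Complex.I_sq

theorem weak_form_beta_general (L ω lam : ℝ) (hL : 0 < L) (hω : 0 < ω) (hlam : 0 < lam)
    (f₂ g₂ g₃ : ℝ → ℂ)
    (hf₂ : MemLp f₂ 2 (volume.restrict (Set.Ioo (0:ℝ) L)))
    (hg₃ : MemLp g₃ 2 (volume.restrict (Set.Ioo (0:ℝ) L)))
    (β η : H1 L) (γ : ℝ → ℂ)
    (hode : ∀ᵐ t ∂(volume.restrict (Set.Ioo (0:ℝ) L)),
      -β.deriv t + γ t - Complex.I * ω * η.toFun t = f₂ t ∧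
      η.deriv t + Complex.I * ω * β.toFun t = g₂ t ∧
      η.toFun t + Complex.I * ω * (lam : ℂ)⁻¹ * γ t = g₃ t)
    (hbcL : (((lam : ℂ) - (ω : ℂ) ^ 2) ^ ((1 : ℂ) / 2)) * η.toFun L
        = Complex.I * ω * β.toFun L) :
    ∀ v : H1 L, v.toFun 0 = 0 →
      (∫ t in Set.Ioo (0:ℝ) L, β.deriv t * star (v.deriv t)) +
        ((lam : ℂ) - (ω : ℂ) ^ 2) * (∫ t in Set.Ioo (0:ℝ) L, β.toFun t * star (v.toFun t)) +
        (((lam : ℂ) - (ω : ℂ) ^ 2) ^ ((1 : ℂ) / 2)) * β.toFun L * star (v.toFun L)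
      = -(∫ t in Set.Ioo (0:ℝ) L, f₂ t * star (v.deriv t)) +
        ((lam : ℂ) / (Complex.I * ω)) * (∫ t in Set.Ioo (0:ℝ) L, g₃ t * star (v.deriv t)) +
        (((lam : ℂ) - (ω : ℂ) ^ 2) / (Complex.I * ω)) *
          ∫ t in Set.Ioo (0:ℝ) L, g₂ t * star (v.toFun t) := by
  intro v hv0
  set μ := volume.restrict (Ioo (0:ℝ) L)
  set c : ℂ := (lam : ℂ) - (ω : ℂ) ^ 2
  have hIω : Complex.I * ω ≠ 0 := mul_ne_zero Complex.I_ne_zero (mod_cast hω.ne')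
  have hsqrt : (c ^ ((1 : ℂ) / 2)) ^ 2 = c := by rw [one_div, Complex.cpow_ofNat_inv_pow]
  have hβ' : Complex.I * ω * (∫ t, β.deriv t * star (v.deriv t) ∂μ) +
        c * (∫ t, η.toFun t * star (v.deriv t) ∂μ) =
      -(Complex.I * ω) * (∫ t, f₂ t * star (v.deriv t) ∂μ) +
        lam * ∫ t, g₃ t * star (v.deriv t) ∂μ := by
    rw [← integral_const_mul_add_mul_star _ _ β.memLp_deriv η.memLp_toFun v.memLp_deriv,
      ← integral_const_mul_add_mul_star _ _ hf₂ hg₃ v.memLp_deriv]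
    refine integral_congr_ae ?_
    filter_upwards [hode] with t ht
    rw [I_mul_add_sub_sq_mul_eq (mod_cast hlam.ne') ht.1 ht.2.2]
  have hη' : ∫ t, g₂ t * star (v.toFun t) ∂μ =
      (∫ t, η.deriv t * star (v.toFun t) ∂μ) +
        Complex.I * ω * ∫ t, β.toFun t * star (v.toFun t) ∂μ := by
    rw [← one_mul (∫ t, η.deriv t * star (v.toFun t) ∂μ),
      ← integral_const_mul_add_mul_star _ _ η.memLp_deriv β.memLp_toFun v.memLp_toFun]
    refine integral_congr_ae ?_
    filter_upwards [hode] with t ht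
    rw [one_mul, ht.2.1]
  have hparts := H1.integral_deriv_mul_add_integral_mul_deriv hL.le η v.conj
  simp only [H1.conj, hv0, star_zero, mul_zero, sub_zero] at hparts
  refine mul_left_cancel₀ hIω ?_
  linear_combination hβ' - c * hη' - c * hparts - c ^ ((1 : ℂ) / 2) * star (v.toFun L) * hbcL
    + η.toFun L * star (v.toFun L) * hsqrt
    - (∫ t, g₃ t * star (v.deriv t) ∂μ) * mul_div_cancel₀ (lam : ℂ) hIω
    - (∫ t, g₂ t * star (v.toFun t) ∂μ) * mul_div_cancel₀ c hIω

/-- If `(β, η, γ)` solves `-β' + γ - iωη = f₂`, `η' + iωβ = g₂`,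
`η + iω λ⁻¹ γ = g₃` a.e. on `(0,L)` with `β(0) = 0` and `λ̃ η(L) = iω β(L)`, where
`λ̃ = (λ - ω²)^{1/2}` is the principal square root, then `β` satisfies the weak second-order
formulation: for all `v ∈ H¹(0,L)` with `v(0) = 0`,
`(β',v') + (λ-ω²)(β,v) + λ̃ β(L) conj(v(L)) = -(f₂,v') + (λ/(iω))(g₃,v') + ((λ-ω²)/(iω))(g₂,v)`. -/
theorem weak_form_beta (L ω lam : ℝ) (hL : 0 < L) (hω : 0 < ω) (hlam : 0 < lam)
    (hne : lam ≠ ω ^ 2)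
    (f₂ g₂ g₃ : ℝ → ℂ)
    (hf₂ : MemLp f₂ 2 (volume.restrict (Set.Ioo (0:ℝ) L)))
    (hg₂ : MemLp g₂ 2 (volume.restrict (Set.Ioo (0:ℝ) L)))
    (hg₃ : MemLp g₃ 2 (volume.restrict (Set.Ioo (0:ℝ) L)))
    (β η : H1 L) (γ : ℝ → ℂ) (hγ : MemLp γ 2 (volume.restrict (Set.Ioo (0:ℝ) L)))
    (hode : ∀ᵐ t ∂(volume.restrict (Set.Ioo (0:ℝ) L)),
      -β.deriv t + γ t - Complex.I * ω * η.toFun t = f₂ t ∧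
      η.deriv t + Complex.I * ω * β.toFun t = g₂ t ∧
      η.toFun t + Complex.I * ω * (lam : ℂ)⁻¹ * γ t = g₃ t)
    (hbc0 : β.toFun 0 = 0)
    (hbcL : (((lam : ℂ) - (ω : ℂ) ^ 2) ^ ((1 : ℂ) / 2)) * η.toFun L
        = Complex.I * ω * β.toFun L) :
    ∀ v : H1 L, v.toFun 0 = 0 →
      (∫ t in Set.Ioo (0:ℝ) L, β.deriv t * star (v.deriv t)) +
        ((lam : ℂ) - (ω : ℂ) ^ 2) * (∫ t in Set.Ioo (0:ℝ) L, β.toFun t * star (v.toFun t)) +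
        (((lam : ℂ) - (ω : ℂ) ^ 2) ^ ((1 : ℂ) / 2)) * β.toFun L * star (v.toFun L)
      = -(∫ t in Set.Ioo (0:ℝ) L, f₂ t * star (v.deriv t)) +
        ((lam : ℂ) / (Complex.I * ω)) * (∫ t in Set.Ioo (0:ℝ) L, g₃ t * star (v.deriv t)) +
        (((lam : ℂ) - (ω : ℂ) ^ 2) / (Complex.I * ω)) *
          ∫ t in Set.Ioo (0:ℝ) L, g₂ t * star (v.toFun t) :=
  weak_form_beta_general L ω lam hL hω hlam f₂ g₂ g₃ hf₂ hg₃ β η γ hode hbcL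
end
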